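/- arXiv:1303.4102 — 4 statements merged into one kernel-verified Lean document; each statement's English description precedes it below -/
import Mathlib

section
/- If q = v² is a root of unity associated with the integer p (i.e., p ≥ 2 is the smallest positive integer with q^{2p} = 1), then (S^+)^p = 0 and (S^−)^p = 0 as endomorphisms of V = (ℂ²)^{⊗n}. -/
open Matrix Filter Topology BigOperators Finset

noncomputable section

/-- Spin configurations: basis labels of `(ℂ²)^{⊗n}`; `0` is `+`, `1` is `−`. -/
abbrev Spins (n : ℕ) := Fin n → Fin 2

/-- σ⁺ = [[0,1],[0,0]] -/
def sigmaP : Matrix (Fin 2) (Fin 2) ℂ := fun a b => if a = 0 ∧ b = 1 then 1 else 0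

/-- σ⁻ = [[0,0],[1,0]] -/
def sigmaM : Matrix (Fin 2) (Fin 2) ℂ := fun a b => if a = 1 ∧ b = 0 then 1 else 0

/-- diagonal entry of K = diag(v, v⁻¹) -/
def Kdiag (v : ℂ) (a : Fin 2) : ℂ := if a = 0 then v else v⁻¹

/-- `S_i^A = K^{⊗(i−1)} ⊗ A ⊗ (K⁻¹)^{⊗(n−i)}` as a matrix on `(ℂ²)^{⊗n}`. -/
def siteOp (n : ℕ) (v : ℂ) (A : Matrix (Fin 2) (Fin 2) ℂ) (i : Fin n) :
    Matrix (Spins n) (Spins n) ℂ :=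
  fun x y => ∏ k : Fin n,
    if k < i then (if x k = y k then Kdiag v (x k) else 0)
    else if k = i then A (x k) (y k)
    else (if x k = y k then Kdiag v⁻¹ (x k) else 0)

/-- `S^+ = Σ_i S_i^+`. -/
def SpOp (n : ℕ) (v : ℂ) : Matrix (Spins n) (Spins n) ℂ := ∑ i : Fin n, siteOp n v sigmaP i

/-- `S^- = Σ_i S_i^-`. -/
def SmOp (n : ℕ) (v : ℂ) : Matrix (Spins n) (Spins n) ℂ := ∑ i : Fin n, siteOp n v sigmaM i

/-- `Σ^z = Σ_i 1 ⊗ ⋯ ⊗ σ^z ⊗ ⋯ ⊗ 1` (diagonal). -/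
def SzOp (n : ℕ) : Matrix (Spins n) (Spins n) ℂ :=
  fun x y => if x = y then ∑ k : Fin n, (if x k = 0 then (1 : ℂ) else -1) else 0

/-- symmetric q-number `[k] = (q^k − q^{−k})/(q − q⁻¹)`. -/
def qNum (q : ℂ) (k : ℤ) : ℂ := (q ^ k - q ^ (-k)) / (q - q⁻¹)

/-- q-factorial `[k]! = [k][k−1]⋯[1]`, `[0]! = 1`. -/
def qFact (q : ℂ) : ℕ → ℂ
  | 0 => 1
  | k + 1 => qNum q (k + 1) * qFact q k

/-- q-binomial `[k choose l]`, zero unless `0 ≤ l ≤ k`. -/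
def qBinom (q : ℂ) (k l : ℤ) : ℂ :=
  if 0 ≤ l ∧ l ≤ k then qFact q k.toNat / (qFact q l.toNat * qFact q (k - l).toNat) else 0

/-- `q` is generic: nonzero and not a root of unity. -/
def Generic (q : ℂ) : Prop := q ≠ 0 ∧ ∀ k : ℕ, 0 < k → q ^ k ≠ 1

def GenericSet : Set ℂ := {q | Generic q}

/-- the root of unity `q` is associated with `p`: `p ≥ 2` is minimal with `q^{2p} = 1`. -/
def AssocRootOfUnity (q : ℂ) (p : ℕ) : Prop :=
  2 ≤ p ∧ q ^ (2 * p) = 1 ∧ ∀ k : ℕ, 0 < k → k < p → q ^ (2 * k) ≠ 1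

/-- the coefficient `a_{i,j,m}` of the paper, with `k = j − m` and `s = j + m`:
`a = (−1)^{i+k} [i choose k] [i+s+1 choose i+1]⁻¹ [k+s+1] / [i+1]`. -/
def aCoeff (q : ℂ) (i k s : ℤ) : ℂ :=
  (-1 : ℂ) ^ (i + k) * qBinom q i k * (qBinom q (i + s + 1) (i + 1))⁻¹ *
    qNum q (k + s + 1) / qNum q (i + 1)

/-- `S_r = (S^−)^r (S^+)^r / ([r]!)²` with `q = v²`. -/
def SOp (n : ℕ) (v : ℂ) (r : ℕ) : Matrix (Spins n) (Spins n) ℂ :=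
  ((qFact (v ^ 2) r) ^ 2)⁻¹ • (SmOp n v ^ r * SpOp n v ^ r)

/-- a function of `q` is regular at `q_c` if it has a finite limit as `q → q_c`
through generic values of `q`. -/
def RegularAt (f : ℂ → ℂ) (qc : ℂ) : Prop :=
  ∃ L : ℂ, Tendsto f (𝓝[GenericSet] qc) (𝓝 L)


/-!
Let `q = v²`. The site operators `X_i = S_i^±` satisfy `X_i² = 0` and, for `i < j`,
`X_i X_j = ω X_j X_i` with `ω = q^{∓2}`: the two products differ only in the tensor factors `i` and
`j`, where `σ^±` is commuted past `K` and `K⁻¹` respectively. Since `q` is associated with `p`, `ω` is a primitive `p`-th root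
of unity, so the Gaussian binomials `[p choose k]_ω` with `0 < k < p` vanish and the `ω`-binomial
theorem gives `(a + b)^p = a^p + b^p` whenever `a b = ω b a`. By induction on the number of sites,
`(S^±)^p = Σ_i X_i^p = 0`.
-/

section GaussBinom

variable {R : Type*} [CommRing R]

def gaussBinom (ω : R) : ℕ → ℕ → R
  | _, 0 => 1
  | 0, _ + 1 => 0
  | m + 1, k + 1 => ω ^ (k + 1) * gaussBinom ω m (k + 1) + gaussBinom ω m k

@[simp]
theorem gaussBinom_zero_right (ω : R) (m : ℕ) : gaussBinom ω m 0 = 1 := by cases m <;> rfl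

theorem gaussBinom_succ_succ (ω : R) (m k : ℕ) :
    gaussBinom ω (m + 1) (k + 1) = ω ^ (k + 1) * gaussBinom ω m (k + 1) + gaussBinom ω m k :=
  rfl

theorem gaussBinom_eq_zero_of_lt (ω : R) : ∀ {m k : ℕ}, m < k → gaussBinom ω m k = 0
  | 0, _ + 1, _ => rfl
  | m + 1, k + 1, h => by
    rw [gaussBinom_succ_succ, gaussBinom_eq_zero_of_lt ω (by omega),
      gaussBinom_eq_zero_of_lt ω (by omega), mul_zero, add_zero]

theorem gaussBinom_self (ω : R) : ∀ m : ℕ, gaussBinom ω m m = 1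
  | 0 => rfl
  | m + 1 => by
    rw [gaussBinom_succ_succ, gaussBinom_eq_zero_of_lt ω m.lt_succ_self, gaussBinom_self ω m,
      mul_zero, zero_add]

/-- For `k > m` both sides vanish: on the right, the factor at `j = m` is `1 - ω ^ 0`. -/
theorem gaussBinom_mul_prod (ω : R) : ∀ m k : ℕ,
    gaussBinom ω m k * ∏ j ∈ range k, (1 - ω ^ (j + 1)) = ∏ j ∈ range k, (1 - ω ^ (m - j))
  | _, 0 => by simp
  | 0, k + 1 => by rw [prod_range_succ']; simp [gaussBinom]
  | m + 1, k + 1 => by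
    have hfactor : (∏ j ∈ range k, (1 - ω ^ (m - j))) *
          (ω ^ (k + 1) * (1 - ω ^ (m - k)) + (1 - ω ^ (k + 1)))
        = (∏ j ∈ range k, (1 - ω ^ (m - j))) * (1 - ω ^ (m + 1)) := by
      rcases le_or_gt k m with hkm | hmk
      · rw [mul_sub, ← pow_add, show k + 1 + (m - k) = m + 1 by omega]
        ring
      · rw [prod_eq_zero (mem_range.2 hmk) (by simp)]
        ring
    have ih₁ := gaussBinom_mul_prod ω m k
    have ih₂ := gaussBinom_mul_prod ω m (k + 1)
    rw [prod_range_succ, prod_range_succ] at ih₂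
    rw [prod_range_succ' (fun j => 1 - ω ^ (m + 1 - j)), prod_range_succ, gaussBinom_succ_succ]
    simp only [Nat.add_sub_add_right, Nat.sub_zero]
    linear_combination ω ^ (k + 1) * ih₂ + (1 - ω ^ (k + 1)) * ih₁ + hfactor

theorem gaussBinom_eq_zero_of_isPrimitiveRoot [IsDomain R] {ω : R} {p k : ℕ}
    (hω : IsPrimitiveRoot ω p) (hk₀ : 0 < k) (hkp : k < p) : gaussBinom ω p k = 0 := by
  have h := gaussBinom_mul_prod ω p k
  rw [prod_eq_zero (mem_range.2 hk₀) (by simp [hω.pow_eq_one]) (f := fun j => 1 - ω ^ (p - j))]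
    at h
  refine (mul_eq_zero.1 h).resolve_right (prod_ne_zero_iff.2 fun j hj => ?_)
  exact sub_ne_zero.2 (hω.pow_ne_one_of_pos_of_lt j.succ_ne_zero (by simp at hj; omega)).symm

end GaussBinom

section QCommuting

variable {R A : Type*} [CommRing R] [Ring A] [Algebra R A] {ω : R} {a b : A}

theorem mul_pow_eq_smul_pow_mul (hab : a * b = ω • (b * a)) (k : ℕ) :
    a * b ^ k = ω ^ k • (b ^ k * a) := by
  induction k with
  | zero => simp
  | succ k ih =>
    rw [pow_succ, ← mul_assoc, ih, smul_mul_assoc, mul_assoc, hab, mul_smul_comm, smul_smul,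
      ← mul_assoc, pow_succ]

theorem add_pow_eq_sum_gaussBinom (hab : a * b = ω • (b * a)) (m : ℕ) :
    (a + b) ^ m = ∑ k ∈ range (m + 1), gaussBinom ω m k • (b ^ k * a ^ (m - k)) := by
  induction m with
  | zero => simp
  | succ m ih =>
    have hterm : ∀ k ∈ range (m + 1), (a + b) * (gaussBinom ω m k • (b ^ k * a ^ (m - k)))
        = (ω ^ k * gaussBinom ω m k) • (b ^ k * a ^ (m + 1 - k))
          + gaussBinom ω m k • (b ^ (k + 1) * a ^ (m - k)) := by
      intro k hk
      rw [add_mul, mul_smul_comm, ← mul_assoc, mul_pow_eq_smul_pow_mul hab, smul_mul_assoc,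
        mul_assoc, ← pow_succ', smul_smul, mul_smul_comm, ← mul_assoc, ← pow_succ',
        show m - k + 1 = m + 1 - k by simp at hk; omega, mul_comm (gaussBinom ω m k)]
    rw [pow_succ', ih, mul_sum, sum_congr rfl hterm, sum_add_distrib, sum_range_succ',
      sum_range_succ' (fun k => gaussBinom ω (m + 1) k • _)]
    simp only [gaussBinom_succ_succ, add_smul, sum_add_distrib]
    rw [sum_range_succ (fun k => (ω ^ (k + 1) * gaussBinom ω m (k + 1)) • _),
      gaussBinom_eq_zero_of_lt ω m.lt_succ_self]
    simp only [pow_zero, one_mul, mul_one, gaussBinom_zero_right, one_smul, mul_zero, zero_smul,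
      add_zero, Nat.sub_zero, Nat.add_sub_add_right]
    abel

theorem add_pow_eq_pow_add_pow [IsDomain R] {p : ℕ} (hω : IsPrimitiveRoot ω p) (hp : 0 < p)
    (hab : a * b = ω • (b * a)) : (a + b) ^ p = a ^ p + b ^ p := by
  obtain ⟨m, rfl⟩ := Nat.exists_eq_succ_of_ne_zero hp.ne'
  rw [add_pow_eq_sum_gaussBinom hab, sum_range_succ, sum_range_succ', sum_eq_zero fun k hk => by
    rw [gaussBinom_eq_zero_of_isPrimitiveRoot hω k.succ_pos (by simp at hk; omega), zero_smul]]
  simp [gaussBinom_self]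

theorem sum_pow_eq_sum_pow [IsDomain R] {p : ℕ} (hω : IsPrimitiveRoot ω p) (hp : 0 < p) :
    ∀ {n : ℕ} (X : Fin n → A), (∀ i j, i < j → X i * X j = ω • (X j * X i)) →
      (∑ i, X i) ^ p = ∑ i, X i ^ p
  | 0, _, _ => by simp [zero_pow hp.ne']
  | n + 1, X, hX => by
    have hcomm : (∑ i : Fin n, X i.castSucc) * X (Fin.last n)
        = ω • (X (Fin.last n) * ∑ i : Fin n, X i.castSucc) := by
      simp only [sum_mul, mul_sum, smul_sum]
      exact sum_congr rfl fun i _ => hX _ _ i.castSucc_lt_last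
    rw [Fin.sum_univ_castSucc, add_pow_eq_pow_add_pow hω hp hcomm,
      sum_pow_eq_sum_pow hω hp _ fun i j hij => hX _ _ (Fin.castSucc_lt_castSucc_iff.2 hij),
      Fin.sum_univ_castSucc]

end QCommuting

section PiKron

variable {ι α β γ R : Type*} [Fintype ι] [CommSemiring R]

def piKron (M : ι → Matrix α β R) : Matrix (ι → α) (ι → β) R :=
  of fun x y => ∏ i, M i (x i) (y i)

theorem piKron_mul [DecidableEq ι] [Fintype β] (M : ι → Matrix α β R) (N : ι → Matrix β γ R) :
    piKron M * piKron N = piKron fun i => M i * N i := by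
  ext x y
  simp only [piKron, mul_apply, of_apply, Fintype.prod_sum, prod_mul_distrib]

theorem piKron_smul (c : ι → R) (M : ι → Matrix α β R) :
    piKron (fun i => c i • M i) = (∏ i, c i) • piKron M := by
  ext x y
  simp [piKron, prod_mul_distrib]

theorem piKron_eq_zero {M : ι → Matrix α β R} {i : ι} (h : M i = 0) : piKron M = 0 := by
  ext x y
  exact prod_eq_zero (mem_univ i) (by simp [h])

end PiKron

section SiteOperators

def Kmat (v : ℂ) : Matrix (Fin 2) (Fin 2) ℂ := diagonal (Kdiag v)

def siteFactor {n : ℕ} (v : ℂ) (A : Matrix (Fin 2) (Fin 2) ℂ) (i k : Fin n) :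
    Matrix (Fin 2) (Fin 2) ℂ :=
  if k < i then Kmat v else if k = i then A else Kmat v⁻¹

theorem siteOp_eq_piKron (n : ℕ) (v : ℂ) (A : Matrix (Fin 2) (Fin 2) ℂ) (i : Fin n) :
    siteOp n v A i = piKron (siteFactor v A i) := by
  ext x y
  refine prod_congr rfl fun k _ => ?_
  unfold siteFactor Kmat
  split_ifs <;> simp [*]

theorem Kmat_mul_comm (v w : ℂ) : Kmat v * Kmat w = Kmat w * Kmat v := by
  simp only [Kmat, diagonal_mul_diagonal, mul_comm]

variable {n : ℕ} {v c : ℂ} {A : Matrix (Fin 2) (Fin 2) ℂ}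

theorem siteOp_mul_self (hA : A * A = 0) (i : Fin n) : siteOp n v A i * siteOp n v A i = 0 := by
  rw [siteOp_eq_piKron, piKron_mul]
  exact piKron_eq_zero (i := i) (by simp [siteFactor, hA])

theorem siteOp_mul_siteOp_of_lt (hAK : A * Kmat v = c • (Kmat v * A))
    (hKA : Kmat v⁻¹ * A = c • (A * Kmat v⁻¹)) {i j : Fin n} (hij : i < j) :
    siteOp n v A i * siteOp n v A j = c ^ 2 • (siteOp n v A j * siteOp n v A i) := by
  have hfactor : (fun k => siteFactor v A i k * siteFactor v A j k) = fun k =>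
      ((if k = i then c else 1) * (if k = j then c else 1)) •
        (siteFactor v A j k * siteFactor v A i k) := by
    funext k
    rcases lt_trichotomy k i with hki | rfl | hik
    · simp [siteFactor, hki, hki.trans hij, hki.ne, (hki.trans hij).ne]
    · simp [siteFactor, hij, hij.ne, hAK]
    rcases lt_trichotomy k j with hkj | rfl | hjk
    · simp [siteFactor, hkj, hik.ne', hkj.ne, hik.not_gt, Kmat_mul_comm]
    · simp [siteFactor, hij.ne', hij.not_gt, hKA]
    · simp [siteFactor, hik.not_gt, hjk.not_gt, hik.ne', hjk.ne']
  simp only [siteOp_eq_piKron, piKron_mul]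
  rw [hfactor, piKron_smul, prod_mul_distrib, prod_ite_eq', prod_ite_eq']
  simp [sq]

theorem sum_siteOp_pow_eq_zero {p : ℕ} (hA : A * A = 0) (hAK : A * Kmat v = c • (Kmat v * A))
    (hKA : Kmat v⁻¹ * A = c • (A * Kmat v⁻¹)) (hc : IsPrimitiveRoot (c ^ 2) p) (hp : 2 ≤ p) :
    (∑ i, siteOp n v A i) ^ p = 0 := by
  rw [sum_pow_eq_sum_pow hc (by omega) _ fun i j hij => siteOp_mul_siteOp_of_lt hAK hKA hij]
  exact sum_eq_zero fun i _ => pow_eq_zero_of_le hp (by rw [sq]; exact siteOp_mul_self hA i)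

end SiteOperators

section Pauli

variable {v : ℂ}

theorem sigmaP_mul_self : sigmaP * sigmaP = 0 := by
  ext a b; fin_cases a <;> fin_cases b <;> simp [sigmaP, mul_apply]

theorem sigmaM_mul_self : sigmaM * sigmaM = 0 := by
  ext a b; fin_cases a <;> fin_cases b <;> simp [sigmaM, mul_apply]

theorem sigmaP_mul_Kmat (hv : v ≠ 0) : sigmaP * Kmat v = (v ^ 2)⁻¹ • (Kmat v * sigmaP) := by
  ext a b; fin_cases a <;> fin_cases b <;> simp [sigmaP, Kmat, Kdiag]
  field_simp

theorem Kmat_inv_mul_sigmaP (hv : v ≠ 0) :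
    Kmat v⁻¹ * sigmaP = (v ^ 2)⁻¹ • (sigmaP * Kmat v⁻¹) := by
  ext a b; fin_cases a <;> fin_cases b <;> simp [sigmaP, Kmat, Kdiag]
  field_simp

theorem sigmaM_mul_Kmat (hv : v ≠ 0) : sigmaM * Kmat v = v ^ 2 • (Kmat v * sigmaM) := by
  ext a b; fin_cases a <;> fin_cases b <;> simp [sigmaM, Kmat, Kdiag]
  field_simp

theorem Kmat_inv_mul_sigmaM (hv : v ≠ 0) : Kmat v⁻¹ * sigmaM = v ^ 2 • (sigmaM * Kmat v⁻¹) := by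
  ext a b; fin_cases a <;> fin_cases b <;> simp [sigmaM, Kmat, Kdiag]
  field_simp

end Pauli

theorem AssocRootOfUnity.isPrimitiveRoot {q : ℂ} {p : ℕ} (h : AssocRootOfUnity q p) :
    IsPrimitiveRoot (q ^ 2) p :=
  IsPrimitiveRoot.mk_of_lt _ (by have := h.1; omega) (by rw [← pow_mul]; exact h.2.1)
    fun l hl hlp => by rw [← pow_mul]; exact h.2.2 l hl hlp

theorem stmt2_general (n p : ℕ) (v : ℂ) (hv : v ≠ 0)
    (hroot : AssocRootOfUnity (v ^ 2) p) :
    SpOp n v ^ p = 0 ∧ SmOp n v ^ p = 0 := by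
  have hq := hroot.isPrimitiveRoot
  refine ⟨sum_siteOp_pow_eq_zero sigmaP_mul_self (sigmaP_mul_Kmat hv) (Kmat_inv_mul_sigmaP hv)
      ?_ hroot.1,
    sum_siteOp_pow_eq_zero sigmaM_mul_self (sigmaM_mul_Kmat hv) (Kmat_inv_mul_sigmaM hv) hq hroot.1⟩
  rw [inv_pow]
  exact hq.inv

/-- if `q = v²` is a root of unity associated with `p`, then
`(S^+)^p = 0` and `(S^−)^p = 0` on `(ℂ²)^{⊗n}`. -/
theorem stmt2 (n p : ℕ) (hn : 1 ≤ n) (v : ℂ) (hv : v ≠ 0)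
    (hroot : AssocRootOfUnity (v ^ 2) p) :
    SpOp n v ^ p = 0 ∧ SmOp n v ^ p = 0 :=
  stmt2_general n p v hv hroot
end
end

section
/- For all integers a, b ≥ 0, the operators (S^−)^a (S^+)^a and (S^−)^b (S^+)^b on V = (ℂ²)^{⊗n} commute: (S^−)^a (S^+)^a (S^−)^b (S^+)^b = (S^−)^b (S^+)^b (S^−)^a (S^+)^a. -/
open Matrix Filter Topology BigOperators Finset

noncomputable section

/-!
`S⁺` raises the weight `∑ₖ spin (x k)` of a basis vector by `2` and `S⁻` lowers it by `2`.
For `i ≠ j` the operators `S_i⁺` and `S_j⁻` commute, because moving `σ^±` past the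
`K`-factor of the other operator produces two scalars that cancel. Hence
`[S⁺, S⁻] = ∑ᵢ [S_i⁺, S_i⁻]` is diagonal, and a telescoping sum over the partial weights
shows that its entries depend only on the total weight. So `[S⁺, S⁻] = h(weight)`, and
`(S⁻S⁺) (S⁺)^a = (S⁺)^a (S⁻S⁺ - c_a(weight))` for some function `c_a`. By induction,
`(S⁻)^a (S⁺)^a` then lies in the algebra generated by `S⁻S⁺` and the functions of the weight,
and since `S⁻S⁺` preserves the weight, this algebra is commutative.
-/

theorem Int.exists_add_one_sub_eq {G : Type*} [AddCommGroup G] (d : ℤ → G) :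
    ∃ g : ℤ → G, ∀ m, g (m + 1) - g m = d m := by
  refine ⟨fun m => ∑ t ∈ Ico 0 m, d t - ∑ t ∈ Ico m 0, d t, fun m => ?_⟩
  dsimp only
  rcases le_or_gt 0 m with hm | hm
  · rw [← insert_Ico_right_eq_Ico_add_one hm, sum_insert (by simp),
      Ico_eq_empty_of_le (by omega : (0 : ℤ) ≤ m + 1), Ico_eq_empty_of_le hm]
    abel
  · rw [← insert_Ico_add_one_left_eq_Ico hm, sum_insert (by simp),
      Ico_eq_empty_of_le (by omega : m + 1 ≤ 0), Ico_eq_empty_of_le hm.le]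
    abel

theorem Finset.prod_zpow_eq_zpow_sum₀ {ι G₀ : Type*} [CommGroupWithZero G₀] {a : G₀} (ha : a ≠ 0)
    (s : Finset ι) (f : ι → ℤ) : ∏ i ∈ s, a ^ f i = a ^ ∑ i ∈ s, f i :=
  cons_induction (by simp) (fun _ _ _ _ ↦ by simp [prod_cons, sum_cons, zpow_add₀ ha, *]) s

section PiKronecker

variable {ι d R : Type*} [Fintype ι] [CommRing R]

def piKronecker (M : ι → Matrix d d R) : Matrix (ι → d) (ι → d) R :=
  Matrix.of fun x y => ∏ k, M k (x k) (y k)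

theorem piKronecker_apply (M : ι → Matrix d d R) (x y : ι → d) :
    piKronecker M x y = ∏ k, M k (x k) (y k) := rfl

theorem piKronecker_mul [Fintype d] [DecidableEq ι] (M N : ι → Matrix d d R) :
    piKronecker M * piKronecker N = piKronecker (M * N) := by
  ext x y
  simp only [Matrix.mul_apply, piKronecker_apply, Pi.mul_apply, Fintype.prod_sum]
  exact sum_congr rfl fun z _ => prod_mul_distrib.symm

theorem piKronecker_smul (c : ι → R) (M : ι → Matrix d d R) :
    piKronecker (c • M) = (∏ k, c k) • piKronecker M := by
  ext x y
  simp [piKronecker_apply, prod_mul_distrib]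

theorem piKronecker_update_sub [DecidableEq ι] (M : ι → Matrix d d R) (i : ι)
    (A B : Matrix d d R) :
    piKronecker (Function.update M i A) - piKronecker (Function.update M i B) =
      piKronecker (Function.update M i (A - B)) := by
  ext x y
  have off_i (C : Matrix d d R) : ∏ k ∈ {i}ᶜ, Function.update M i C k (x k) (y k) =
      ∏ k ∈ {i}ᶜ, M k (x k) (y k) :=
    prod_congr rfl fun k hk => by rw [Function.update_of_ne (by simpa using hk)]
  simp only [Matrix.sub_apply, piKronecker_apply, Fintype.prod_eq_mul_prod_compl i,
    Function.update_self, off_i, sub_mul]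

theorem piKronecker_diagonal [DecidableEq d] (e : ι → d → R) :
    piKronecker (fun k => diagonal (e k)) = diagonal fun x => ∏ k, e k (x k) := by
  classical
  ext x y
  by_cases h : x = y
  · subst h; simp [piKronecker_apply]
  · obtain ⟨k, hk⟩ := Function.ne_iff.mp h
    rw [diagonal_apply_ne _ h, piKronecker_apply]
    exact prod_eq_zero (mem_univ k) (diagonal_apply_ne _ hk)

end PiKronecker

section PrefixSum

variable {n : ℕ} (s : Fin n → ℤ)

def prefixSum (t : ℕ) : ℤ := ∑ k : Fin n, if (k : ℕ) < t then s k else 0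

theorem prefixSum_zero : prefixSum s 0 = 0 := by simp [prefixSum]

theorem prefixSum_self : prefixSum s n = ∑ k, s k :=
  sum_congr rfl fun k _ => if_pos k.isLt

theorem prefixSum_succ (i : Fin n) : prefixSum s (i + 1) = prefixSum s i + s i := by
  have split (k : Fin n) : (if (k : ℕ) < i + 1 then s k else 0) =
      (if (k : ℕ) < i then s k else 0) + (if k = i then s k else 0) := by
    rcases lt_trichotomy (k : ℕ) i with h | h | h
    · simp [h, h.trans (Nat.lt_succ_self _), Fin.ne_of_lt h]
    · simp [Fin.ext h]
    · simp [h.not_gt, show ¬ (k : ℕ) < i + 1 by omega, (Fin.ne_of_lt h).symm]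
  simp only [prefixSum, split, sum_add_distrib, sum_ite_eq', mem_univ, if_true]

theorem sum_compl_ite_lt (i : Fin n) :
    ∑ k ∈ ({i}ᶜ : Finset (Fin n)), (if k < i then s k else -s k) =
      2 * prefixSum s i + s i - ∑ k, s k := by
  have hsplit : ∑ k, (if k < i then s k else -s k) = 2 * prefixSum s i - ∑ k, s k := by
    simp only [prefixSum, mul_sum, ← sum_sub_distrib]
    refine sum_congr rfl fun k _ => ?_
    simp only [Fin.val_fin_lt]
    split_ifs <;> ring
  rw [Fintype.sum_eq_add_sum_compl i, if_neg (lt_irrefl i)] at hsplit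
  linarith

theorem sign_mul_zpow_eq_sub {q : ℂ} {g : ℤ → ℂ} (hg : ∀ m, g (m + 1) - g m = q ^ (2 * m + 1))
    {ε : ℤ} (hε : ε = 1 ∨ ε = -1) (m : ℤ) : ε * q ^ (2 * m + ε) = g (m + ε) - g m := by
  rcases hε with rfl | rfl
  · simp [hg]
  · have := hg (m - 1)
    rw [sub_add_cancel, show 2 * (m - 1) + 1 = 2 * m - 1 by ring] at this
    rw [← sub_eq_add_neg, ← sub_eq_add_neg, ← this]
    push_cast
    ring

theorem sum_mul_prod_zpow_telescope {q : ℂ} (hq : q ≠ 0) (hs : ∀ k, s k = 1 ∨ s k = -1)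
    {g : ℤ → ℂ} (hg : ∀ m, g (m + 1) - g m = q ^ (2 * m + 1)) :
    ∑ i, s i * ∏ k ∈ ({i}ᶜ : Finset (Fin n)), q ^ (if k < i then s k else -s k) =
      q ^ (-∑ k, s k) * (g (∑ k, s k) - g 0) := by
  have term (i : Fin n) :
      s i * ∏ k ∈ ({i}ᶜ : Finset (Fin n)), q ^ (if k < i then s k else -s k) =
        q ^ (-∑ k, s k) * (g (prefixSum s (i + 1)) - g (prefixSum s i)) := by
    rw [prod_zpow_eq_zpow_sum₀ hq, sum_compl_ite_lt, prefixSum_succ,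
      ← sign_mul_zpow_eq_sub hg (hs i), sub_eq_add_neg, zpow_add₀ hq]
    ring
  rw [sum_congr rfl fun i _ => term i, ← mul_sum,
    Fin.sum_univ_eq_sum_range (fun t => g (prefixSum s (t + 1)) - g (prefixSum s t)),
    sum_range_sub (fun t => g (prefixSum s t)), prefixSum_zero, prefixSum_self]

end PrefixSum

def spin (a : Fin 2) : ℤ := if a = 0 then 1 else -1

theorem spin_eq_one_or_neg_one (a : Fin 2) : spin a = 1 ∨ spin a = -1 := by
  unfold spin; split_ifs <;> simp

section LocalMatrices

variable (w : ℂ)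

theorem sigmaP_mul_diagonal_Kdiag : sigmaP * diagonal (Kdiag w) = w⁻¹ • sigmaP := by
  ext a b; fin_cases a <;> fin_cases b <;> simp [sigmaP, Kdiag, Matrix.mul_apply]

theorem diagonal_Kdiag_mul_sigmaP : diagonal (Kdiag w) * sigmaP = w • sigmaP := by
  ext a b; fin_cases a <;> fin_cases b <;> simp [sigmaP, Kdiag, Matrix.mul_apply]

theorem sigmaM_mul_diagonal_Kdiag : sigmaM * diagonal (Kdiag w) = w • sigmaM := by
  ext a b; fin_cases a <;> fin_cases b <;> simp [sigmaM, Kdiag, Matrix.mul_apply]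

theorem diagonal_Kdiag_mul_sigmaM : diagonal (Kdiag w) * sigmaM = w⁻¹ • sigmaM := by
  ext a b; fin_cases a <;> fin_cases b <;> simp [sigmaM, Kdiag, Matrix.mul_apply]

theorem sigma_commutator_eq_diagonal :
    sigmaP * sigmaM - sigmaM * sigmaP = diagonal fun a => (spin a : ℂ) := by
  ext a b; fin_cases a <;> fin_cases b <;> simp [sigmaP, sigmaM, spin, Matrix.mul_apply]

theorem Kdiag_mul_self (a : Fin 2) : Kdiag w a * Kdiag w a = (w ^ 2) ^ spin a := by
  fin_cases a <;> simp [Kdiag, spin, sq]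

end LocalMatrices

section SpinChain

variable {n : ℕ} {v : ℂ}

def kFactor (v : ℂ) (i k : Fin n) : ℂ := if k < i then v else v⁻¹

theorem kFactor_ne_zero (hv : v ≠ 0) (i k : Fin n) : kFactor v i k ≠ 0 := by
  unfold kFactor; split_ifs <;> simp [hv]

theorem kFactor_mul_kFactor (hv : v ≠ 0) {i j : Fin n} (hij : i ≠ j) :
    kFactor v j i * kFactor v i j = 1 := by
  rcases hij.lt_or_gt with h | h <;> simp [kFactor, h, h.not_gt, hv]

theorem kFactor_sq_zpow (i k : Fin n) (m : ℤ) :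
    (kFactor v i k ^ 2) ^ m = (v ^ 2) ^ (if k < i then m else -m) := by
  unfold kFactor; split_ifs <;> simp [inv_pow, _root_.inv_zpow']

theorem siteOp_eq_piKronecker (A : Matrix (Fin 2) (Fin 2) ℂ) (i : Fin n) :
    siteOp n v A i =
      piKronecker (Function.update (fun k => diagonal (Kdiag (kFactor v i k))) i A) := by
  ext x y
  refine prod_congr rfl fun k _ => ?_
  rcases lt_trichotomy k i with h | rfl | h
  · simp [h, h.ne, kFactor, diagonal_apply]
  · simp
  · simp [h.not_gt, h.ne', kFactor, diagonal_apply]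

theorem siteOp_sigmaP_commute_siteOp_sigmaM (hv : v ≠ 0) {i j : Fin n} (hij : i ≠ j) :
    Commute (siteOp n v sigmaP i) (siteOp n v sigmaM j) := by
  set u := kFactor v j i
  set u' := kFactor v i j
  have hu : u ≠ 0 := kFactor_ne_zero hv j i
  have hu' : u' ≠ 0 := kFactor_ne_zero hv i j
  set P := Function.update (fun k => diagonal (Kdiag (kFactor v i k))) i sigmaP
  set M := Function.update (fun k => diagonal (Kdiag (kFactor v j k))) j sigmaM
  set c : Fin n → ℂ := Pi.mulSingle i (u⁻¹ * u⁻¹) * Pi.mulSingle j (u'⁻¹ * u'⁻¹)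
  have local_comm : P * M = c • (M * P) := by
    funext k
    by_cases hki : k = i
    · subst hki
      simp only [Pi.mul_apply, Function.update_self, Function.update_of_ne hij, Pi.smul_apply',
        Pi.mulSingle_eq_same, Pi.mulSingle_eq_of_ne hij, mul_one, sigmaP_mul_diagonal_Kdiag,
        diagonal_Kdiag_mul_sigmaP, smul_smul, P, M, c, u]
      field_simp
    by_cases hkj : k = j
    · subst hkj
      simp only [Pi.mul_apply, Function.update_self, Function.update_of_ne hki, Pi.smul_apply',
        Pi.mulSingle_eq_same, Pi.mulSingle_eq_of_ne hki, one_mul, sigmaM_mul_diagonal_Kdiag,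
        diagonal_Kdiag_mul_sigmaM, smul_smul, P, M, c, u']
      field_simp
    · simp [P, M, c, hki, hkj, Pi.mulSingle, diagonal_mul_diagonal, mul_comm]
  have prod_c : ∏ k, c k = 1 := by
    simp only [c, Pi.mul_apply, prod_mul_distrib, prod_pi_mulSingle', mem_univ, if_true]
    rw [show u⁻¹ * u⁻¹ * (u'⁻¹ * u'⁻¹) = ((u * u')⁻¹) ^ 2 by ring, kFactor_mul_kFactor hv hij]
    simp
  rw [Commute, SemiconjBy, siteOp_eq_piKronecker, siteOp_eq_piKronecker, piKronecker_mul,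
    piKronecker_mul, local_comm, piKronecker_smul, prod_c, one_smul]

theorem siteOp_commutator_eq_diagonal (i : Fin n) :
    siteOp n v sigmaP i * siteOp n v sigmaM i - siteOp n v sigmaM i * siteOp n v sigmaP i =
      diagonal fun x => (spin (x i) : ℂ) *
        ∏ k ∈ ({i}ᶜ : Finset (Fin n)), (v ^ 2) ^ (if k < i then spin (x k) else -spin (x k)) := by
  set e : Fin n → Fin 2 → ℂ := fun k a => (v ^ 2) ^ (if k < i then spin a else -spin a)
  have K_sq : (fun k => diagonal (Kdiag (kFactor v i k))) *
      (fun k => diagonal (Kdiag (kFactor v i k))) = fun k => diagonal (e k) := by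
    funext k
    simp only [Pi.mul_apply, diagonal_mul_diagonal, Kdiag_mul_self, kFactor_sq_zpow, e]
  have update_diagonal :
      Function.update (fun k => diagonal (e k)) i (diagonal fun a => (spin a : ℂ)) =
        fun k => diagonal (Function.update e i (fun a => (spin a : ℂ)) k) :=
    funext fun k => (Function.apply_update (fun _ => diagonal) e i _ k).symm
  rw [siteOp_eq_piKronecker, siteOp_eq_piKronecker, piKronecker_mul, piKronecker_mul,
    ← Function.update_mul, ← Function.update_mul, piKronecker_update_sub,
    sigma_commutator_eq_diagonal, K_sq, update_diagonal, piKronecker_diagonal]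
  congr 1
  funext x
  rw [Fintype.prod_eq_mul_prod_compl i, Function.update_self]
  exact congrArg _ (prod_congr rfl fun k hk => by rw [Function.update_of_ne (by simpa using hk)])

def weight (x : Spins n) : ℤ := ∑ k, spin (x k)

def weightDiag (f : ℤ → ℂ) : Matrix (Spins n) (Spins n) ℂ := diagonal fun x => f (weight x)

/-- For `q = v²` with `q² ≠ 1` the function of the weight is the `q`-integer
`(q^m - q^{-m}) / (q - q⁻¹)`. -/
theorem SpOp_SmOp_commutator_eq_weightDiag (hv : v ≠ 0) {g : ℤ → ℂ}
    (hg : ∀ m, g (m + 1) - g m = (v ^ 2) ^ (2 * m + 1)) :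
    SpOp n v * SmOp n v - SmOp n v * SpOp n v =
      weightDiag fun m => (v ^ 2) ^ (-m) * (g m - g 0) := by
  have diagonal_terms (i : Fin n) :
      ∑ j, (siteOp n v sigmaP i * siteOp n v sigmaM j - siteOp n v sigmaM j * siteOp n v sigmaP i) =
        siteOp n v sigmaP i * siteOp n v sigmaM i - siteOp n v sigmaM i * siteOp n v sigmaP i :=
    sum_eq_single i (fun j _ hji => sub_eq_zero.mpr
      (siteOp_sigmaP_commute_siteOp_sigmaM hv (Ne.symm hji)).eq) (by simp)
  rw [SpOp, SmOp, sum_mul_sum, sum_mul_sum, sum_comm (s := univ) (t := univ)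
    (f := fun j i => siteOp n v sigmaM j * siteOp n v sigmaP i), ← sum_sub_distrib]
  simp only [← sum_sub_distrib, diagonal_terms, siteOp_commutator_eq_diagonal]
  ext x y
  rw [Matrix.sum_apply]
  by_cases h : x = y
  · subst h
    simp only [weightDiag, diagonal_apply_eq]
    exact sum_mul_prod_zpow_telescope (fun k => spin (x k))
      (pow_ne_zero 2 hv) (fun k => spin_eq_one_or_neg_one (x k)) hg
  · simp [weightDiag, diagonal_apply_ne _ h]

theorem exists_SpOp_SmOp_commutator_eq_weightDiag (hv : v ≠ 0) :
    ∃ h : ℤ → ℂ, SpOp n v * SmOp n v - SmOp n v * SpOp n v = weightDiag h :=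
  let ⟨_, hg⟩ := Int.exists_add_one_sub_eq fun m => (v ^ 2) ^ (2 * m + 1)
  ⟨_, SpOp_SmOp_commutator_eq_weightDiag hv hg⟩

theorem weight_eq_add_of_siteOp_ne_zero {A : Matrix (Fin 2) (Fin 2) ℂ} {δ : ℤ}
    (hA : ∀ a b, A a b ≠ 0 → spin a = spin b + δ) {i : Fin n} {x y : Spins n}
    (h : siteOp n v A i x y ≠ 0) : weight x = weight y + δ := by
  rw [siteOp_eq_piKronecker, piKronecker_apply, prod_ne_zero_iff] at h
  have local_shift (k : Fin n) : spin (x k) = spin (y k) + if k = i then δ else 0 := by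
    have hk := h k (mem_univ k)
    by_cases hki : k = i
    · subst hki
      simpa using hA _ _ (by simpa using hk)
    · rw [Function.update_of_ne hki] at hk
      simp [hki, of_not_not (mt (diagonal_apply_ne _) hk)]
  simp only [weight, local_shift, sum_add_distrib, sum_ite_eq', mem_univ, if_true]

theorem weightDiag_mul_siteOp {A : Matrix (Fin 2) (Fin 2) ℂ} {δ : ℤ}
    (hA : ∀ a b, A a b ≠ 0 → spin a = spin b + δ) (f : ℤ → ℂ) (i : Fin n) :
    weightDiag f * siteOp n v A i = siteOp n v A i * weightDiag fun m => f (m + δ) := by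
  ext x y
  rw [weightDiag, weightDiag, diagonal_mul, mul_diagonal]
  by_cases h : siteOp n v A i x y = 0
  · simp [h]
  · rw [weight_eq_add_of_siteOp_ne_zero hA h, mul_comm]

theorem weightDiag_mul_SpOp (f : ℤ → ℂ) :
    weightDiag f * SpOp n v = SpOp n v * weightDiag fun m => f (m + 2) := by
  have hA : ∀ a b, sigmaP a b ≠ 0 → spin a = spin b + 2 := by
    intro a b hab; fin_cases a <;> fin_cases b <;> simp_all [sigmaP, spin]
  simp only [SpOp, mul_sum, sum_mul, weightDiag_mul_siteOp hA]

theorem weightDiag_mul_SmOp (f : ℤ → ℂ) :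
    weightDiag f * SmOp n v = SmOp n v * weightDiag fun m => f (m - 2) := by
  have hA : ∀ a b, sigmaM a b ≠ 0 → spin a = spin b + -2 := by
    intro a b hab; fin_cases a <;> fin_cases b <;> simp_all [sigmaM, spin]
  simp only [SmOp, mul_sum, sum_mul, weightDiag_mul_siteOp hA, ← sub_eq_add_neg]

theorem weightDiag_commute_SmOp_mul_SpOp (f : ℤ → ℂ) :
    Commute (weightDiag f) (SmOp n v * SpOp n v) := by
  rw [Commute, SemiconjBy, ← mul_assoc, weightDiag_mul_SmOp, mul_assoc, weightDiag_mul_SpOp,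
    ← mul_assoc]
  simp

theorem weightDiag_commute_weightDiag (f g : ℤ → ℂ) :
    Commute (weightDiag f : Matrix (Spins n) (Spins n) ℂ) (weightDiag g) :=
  commute_diagonal _ _

theorem weightDiag_add (f g : ℤ → ℂ) :
    (weightDiag f + weightDiag g : Matrix (Spins n) (Spins n) ℂ) = weightDiag (f + g) :=
  diagonal_add _ _

theorem exists_SmOp_mul_SpOp_mul_SpOp_pow (hv : v ≠ 0) (a : ℕ) :
    ∃ c : ℤ → ℂ, SmOp n v * SpOp n v * SpOp n v ^ a =
      SpOp n v ^ a * (SmOp n v * SpOp n v - weightDiag c) := by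
  obtain ⟨h, hcomm⟩ := exists_SpOp_SmOp_commutator_eq_weightDiag (n := n) hv
  induction a with
  | zero => exact ⟨0, by simp [weightDiag]⟩
  | succ a ih =>
    obtain ⟨c, hc⟩ := ih
    refine ⟨fun m => h (m + 2) + c (m + 2), ?_⟩
    have hE : SmOp n v * SpOp n v * SpOp n v =
        SpOp n v * (SmOp n v * SpOp n v - weightDiag fun m => h (m + 2)) := by
      rw [mul_sub, ← weightDiag_mul_SpOp, ← hcomm]
      noncomm_ring
    rw [pow_succ, ← mul_assoc, hc, mul_assoc, sub_mul, hE, weightDiag_mul_SpOp, ← mul_sub,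
      sub_sub, weightDiag_add, ← mul_assoc]
    rfl

variable (n v) in
def ladderAlgebra : Subalgebra ℂ (Matrix (Spins n) (Spins n) ℂ) :=
  Algebra.adjoin ℂ (insert (SmOp n v * SpOp n v) (Set.range weightDiag))

theorem ladderAlgebra_commute {A B : Matrix (Spins n) (Spins n) ℂ} (hA : A ∈ ladderAlgebra n v)
    (hB : B ∈ ladderAlgebra n v) : Commute A B := by
  have generators_commute : ∀ X ∈ insert (SmOp n v * SpOp n v) (Set.range weightDiag),
      ∀ Y ∈ insert (SmOp n v * SpOp n v) (Set.range weightDiag), Commute X Y := by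
    rintro _ (rfl | ⟨f, rfl⟩) _ (rfl | ⟨g, rfl⟩)
    · exact Commute.refl _
    · exact (weightDiag_commute_SmOp_mul_SpOp g).symm
    · exact weightDiag_commute_SmOp_mul_SpOp f
    · exact weightDiag_commute_weightDiag f g
  exact Algebra.commute_of_mem_adjoin_of_forall_mem_commute hB fun Y hY =>
    (Algebra.commute_of_mem_adjoin_of_forall_mem_commute hA fun X hX =>
      (generators_commute Y hY X hX)).symm

theorem SmOp_pow_mul_SpOp_pow_mem_ladderAlgebra (hv : v ≠ 0) (a : ℕ) :
    SmOp n v ^ a * SpOp n v ^ a ∈ ladderAlgebra n v := by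
  induction a with
  | zero => simp
  | succ a ih =>
    obtain ⟨c, hc⟩ := exists_SmOp_mul_SpOp_mul_SpOp_pow (n := n) hv a
    have hX : SmOp n v * SpOp n v ∈ ladderAlgebra n v := Algebra.subset_adjoin (Set.mem_insert _ _)
    have hc_mem : weightDiag c ∈ ladderAlgebra n v :=
      Algebra.subset_adjoin (Set.mem_insert_of_mem _ ⟨c, rfl⟩)
    rw [pow_succ, pow_succ', mul_assoc, ← mul_assoc (SmOp n v), hc, ← mul_assoc]
    exact mul_mem ih (sub_mem hX hc_mem)

end SpinChain

theorem stmt4_general (n : ℕ) (v : ℂ) (hv : v ≠ 0) (a b : ℕ) :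
    (SmOp n v ^ a * SpOp n v ^ a) * (SmOp n v ^ b * SpOp n v ^ b) =
    (SmOp n v ^ b * SpOp n v ^ b) * (SmOp n v ^ a * SpOp n v ^ a) :=
  (ladderAlgebra_commute (SmOp_pow_mul_SpOp_pow_mem_ladderAlgebra hv a)
    (SmOp_pow_mul_SpOp_pow_mem_ladderAlgebra hv b)).eq

/-- the operators `(S^−)^a (S^+)^a` and `(S^−)^b (S^+)^b` commute. -/
theorem stmt4 (n : ℕ) (hn : 1 ≤ n) (v : ℂ) (hv : v ≠ 0) (a b : ℕ) :
    (SmOp n v ^ a * SpOp n v ^ a) * (SmOp n v ^ b * SpOp n v ^ b) =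
    (SmOp n v ^ b * SpOp n v ^ b) * (SmOp n v ^ a * SpOp n v ^ a) :=
  stmt4_general n v hv a b

end
end

section
/- Let q be generic, let M be a nonnegative integer, and let i ≥ 1 be an integer. Then Σ_{r=0}^{i} (−1)^r [M+2r+1] [i choose r] [i+M+r+1 choose i+1]^{−1} = 0. (With M = 2m and j = m + r this reads Σ_{j=m}^{m+i} (−1)^{j−m} [2j+1] [i choose j−m] [i+j+m+1 choose i+1]^{−1} = 0.) -/
open Matrix Filter Topology BigOperators Finset

noncomputable section

/-! The sum telescopes. With `N = i + M + r + 1` put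
`G r = (-1)^r [r] [N] [i choose r] / [N choose i+1]`; then `[i]` times the `r`-th summand is
`G r - G (r + 1)`, and `G 0 = 0 = G (i + 1)`. The absorption identities
`[r+1] [i choose r+1] = [i-r] [i choose r]` and `[M+r+1] [N+1 choose i+1] = [N+1] [N choose i+1]`
bring `G (r + 1)` to the denominator of `G r`, after which the step is the three-term identity
`[i] [M+2r+1] = [r] [i+M+r+1] + [M+r+1] [i-r]` for symmetric q-numbers. -/

@[simp]
theorem qNum_zero (q : ℂ) : qNum q 0 = 0 := by simp [qNum]

theorem qNum_mul_qNum_add (q : ℂ) (x y z : ℤ) :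
    qNum q z * qNum q (x + y) = qNum q x * qNum q (z + y) + qNum q y * qNum q (z - x) := by
  by_cases hd : q - q⁻¹ = 0
  · simp [qNum, hd]
  have hq : q ≠ 0 := by rintro rfl; simp at hd
  simp only [qNum, _root_.zpow_neg, zpow_add₀ hq, zpow_sub₀ hq]
  field_simp
  ring

theorem qFact_succ (q : ℂ) (n : ℕ) : qFact q (n + 1) = qNum q ((n : ℤ) + 1) * qFact q n := rfl

theorem qBinom_of_lt (q : ℂ) {n k : ℤ} (h : n < k) : qBinom q n k = 0 := by
  rw [qBinom, if_neg]
  omega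

theorem qBinom_add_left (q : ℂ) (k m : ℕ) :
    qBinom q ((k + m : ℕ) : ℤ) k = qFact q (k + m) / (qFact q k * qFact q m) := by
  rw [qBinom, if_pos ⟨by positivity, by omega⟩, show ((k + m : ℕ) : ℤ) - k = m by omega]
  simp only [Int.toNat_natCast]

namespace Generic

variable {q : ℂ}

theorem sub_inv_ne_zero (hq : Generic q) : q - q⁻¹ ≠ 0 := by
  refine sub_ne_zero.mpr fun h => hq.2 2 two_pos ?_
  calc q ^ 2 = q * q⁻¹ := by rw [sq, ← h]
    _ = 1 := mul_inv_cancel₀ hq.1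

theorem qNum_ne_zero (hq : Generic q) {k : ℤ} (hk : 0 < k) : qNum q k ≠ 0 := by
  lift k to ℕ using hk.le
  refine div_ne_zero (sub_ne_zero.mpr fun h => hq.2 (2 * k) (by omega) ?_) hq.sub_inv_ne_zero
  calc q ^ (2 * k) = q ^ (k : ℤ) * q ^ (k : ℤ) := by rw [two_mul, pow_add, zpow_natCast]
    _ = q ^ (k : ℤ) * q ^ (-(k : ℤ)) := congrArg (q ^ (k : ℤ) * ·) h
    _ = 1 := by rw [← zpow_add₀ hq.1, add_neg_cancel, zpow_zero]

theorem qFact_ne_zero (hq : Generic q) (n : ℕ) : qFact q n ≠ 0 := by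
  induction n with
  | zero => exact one_ne_zero
  | succ n ih => exact mul_ne_zero (hq.qNum_ne_zero (by omega)) ih

theorem qBinom_ne_zero (hq : Generic q) {n k : ℤ} (h0 : 0 ≤ k) (hk : k ≤ n) :
    qBinom q n k ≠ 0 := by
  rw [qBinom, if_pos ⟨h0, hk⟩]
  exact div_ne_zero (hq.qFact_ne_zero _) (mul_ne_zero (hq.qFact_ne_zero _) (hq.qFact_ne_zero _))

theorem qNum_succ_mul_qBinom_succ (hq : Generic q) (n k : ℕ) :
    qNum q ((k : ℤ) + 1) * qBinom q n ((k : ℤ) + 1) = qNum q ((n : ℤ) - k) * qBinom q n k := by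
  rcases lt_or_ge k n with hkn | hnk
  · obtain ⟨m, rfl⟩ := Nat.exists_eq_add_of_lt hkn
    have h₁ : qBinom q ((k + m + 1 : ℕ) : ℤ) ((k : ℤ) + 1) =
        qFact q (k + 1 + m) / (qFact q (k + 1) * qFact q m) := by
      rw [← qBinom_add_left, add_right_comm]
      push_cast
      rfl
    have h₂ : qBinom q ((k + m + 1 : ℕ) : ℤ) k =
        qFact q (k + (m + 1)) / (qFact q k * qFact q (m + 1)) := by
      rw [← qBinom_add_left, add_assoc]
    rw [h₁, h₂, show ((k + m + 1 : ℕ) : ℤ) - k = (m : ℤ) + 1 by push_cast; ring,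
      qFact_succ q k, qFact_succ q m, add_right_comm k 1 m, ← add_assoc]
    have := hq.qFact_ne_zero
    have hk := hq.qNum_ne_zero (k := (k : ℤ) + 1) (by positivity)
    have hm := hq.qNum_ne_zero (k := (m : ℤ) + 1) (by positivity)
    field_simp
  · rw [qBinom_of_lt q (by omega : (n : ℤ) < k + 1), mul_zero]
    rcases hnk.eq_or_lt with rfl | hlt
    · simp
    · rw [qBinom_of_lt q (by omega : (n : ℤ) < k), mul_zero]

theorem qNum_sub_mul_qBinom_succ (hq : Generic q) {n k : ℕ} (hk : k ≤ n) :
    qNum q ((n : ℤ) + 1 - k) * qBinom q ((n : ℤ) + 1) k =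
      qNum q ((n : ℤ) + 1) * qBinom q n k := by
  obtain ⟨m, rfl⟩ := Nat.exists_eq_add_of_le hk
  have h₁ : qBinom q (((k + m : ℕ) : ℤ) + 1) k =
      qFact q (k + m + 1) / (qFact q k * qFact q (m + 1)) := by
    rw [add_assoc, ← qBinom_add_left]
    congr 1
  rw [h₁, qBinom_add_left, show ((k + m : ℕ) : ℤ) + 1 - k = (m : ℤ) + 1 by push_cast; ring,
    qFact_succ q m, qFact_succ q (k + m)]
  have := hq.qFact_ne_zero
  have hm := hq.qNum_ne_zero (k := (m : ℤ) + 1) (by positivity)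
  push_cast
  field_simp

end Generic

def antidifference (q : ℂ) (M i r : ℕ) : ℂ :=
  (-1 : ℂ) ^ r * qNum q r * qNum q ((i : ℤ) + M + r + 1) * qBinom q i r /
    qBinom q ((i : ℤ) + M + r + 1) ((i : ℤ) + 1)

theorem antidifference_zero (q : ℂ) (M i : ℕ) : antidifference q M i 0 = 0 := by
  simp [antidifference]

theorem antidifference_of_lt (q : ℂ) (M : ℕ) {i r : ℕ} (h : i < r) :
    antidifference q M i r = 0 := by
  rw [antidifference, qBinom_of_lt q (by omega : (i : ℤ) < r)]
  simp

namespace Generic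

variable {q : ℂ}

theorem antidifference_succ (hq : Generic q) (M i r : ℕ) :
    antidifference q M i (r + 1) = -((-1 : ℂ) ^ r * qNum q ((i : ℤ) - r) *
      qNum q ((M : ℤ) + r + 1) * qBinom q i r / qBinom q ((i : ℤ) + M + r + 1) ((i : ℤ) + 1)) := by
  have hbinom := hq.qNum_sub_mul_qBinom_succ (n := i + M + r + 1) (k := i + 1) (by omega)
  push_cast at hbinom
  rw [show (i : ℤ) + M + r + 1 + 1 - (i + 1) = M + r + 1 by ring] at hbinom
  have hnum := hq.qNum_succ_mul_qBinom_succ i r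
  have hB := hq.qBinom_ne_zero (n := (i : ℤ) + M + r + 1) (k := (i : ℤ) + 1)
    (by positivity) (by omega)
  have hB' := hq.qBinom_ne_zero (n := (i : ℤ) + M + r + 1 + 1) (k := (i : ℤ) + 1)
    (by positivity) (by omega)
  rw [antidifference]
  push_cast
  rw [show (i : ℤ) + M + (r + 1) + 1 = i + M + r + 1 + 1 by ring, neg_div',
    div_eq_div_iff hB' hB]
  linear_combination (-1 : ℂ) ^ (r + 1) * qNum q ((i : ℤ) + M + r + 1 + 1) *
      qBinom q ((i : ℤ) + M + r + 1) ((i : ℤ) + 1) * hnum -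
    (-1 : ℂ) ^ (r + 1) * qNum q ((i : ℤ) - r) * qBinom q i r * hbinom

theorem qNum_mul_summand_eq_antidifference_sub (hq : Generic q) (M i r : ℕ) :
    qNum q i * ((-1 : ℂ) ^ r * qNum q ((M : ℤ) + 2 * r + 1) * qBinom q i r *
      (qBinom q ((i : ℤ) + M + r + 1) ((i : ℤ) + 1))⁻¹) =
      antidifference q M i r - antidifference q M i (r + 1) := by
  have key := qNum_mul_qNum_add q r ((M : ℤ) + r + 1) i
  rw [show (r : ℤ) + (M + r + 1) = M + 2 * r + 1 by ring,
    show (i : ℤ) + (M + r + 1) = i + M + r + 1 by ring] at key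
  rw [hq.antidifference_succ, antidifference, sub_neg_eq_add, ← add_div, div_eq_mul_inv,
    ← mul_assoc (qNum q i)]
  congr 1
  linear_combination (-1 : ℂ) ^ r * qBinom q i r * key

end Generic

/-- for generic `q`, `M ≥ 0` and `i ≥ 1`,
`Σ_{r=0}^{i} (−1)^r [M+2r+1] [i choose r] [i+M+r+1 choose i+1]⁻¹ = 0`. -/
theorem stmt8 (q : ℂ) (hq : Generic q) (M i : ℕ) (hi : 1 ≤ i) :
    ∑ r ∈ Finset.range (i + 1),
      (-1 : ℂ) ^ r * qNum q ((M : ℤ) + 2 * r + 1) * qBinom q (i : ℤ) (r : ℤ) *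
        (qBinom q ((i : ℤ) + M + r + 1) ((i : ℤ) + 1))⁻¹ = 0 := by
  have htelescope : qNum q i * ∑ r ∈ Finset.range (i + 1),
      (-1 : ℂ) ^ r * qNum q ((M : ℤ) + 2 * r + 1) * qBinom q (i : ℤ) (r : ℤ) *
        (qBinom q ((i : ℤ) + M + r + 1) ((i : ℤ) + 1))⁻¹ = 0 := by
    rw [Finset.mul_sum,
      Finset.sum_congr rfl fun r _ => hq.qNum_mul_summand_eq_antidifference_sub M i r,
      Finset.sum_range_sub', antidifference_zero, antidifference_of_lt q M (Nat.lt_succ_self i),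
      sub_zero]
  exact (mul_eq_zero.mp htelescope).resolve_left (hq.qNum_ne_zero (by omega))

end
end

section
/- Let q_c be a root of unity associated with p ≥ 2. Let j, m be half-integers with j − m ∈ ℤ≥0 and j + m ∈ ℤ≥0, and let i be an integer with i ≥ j − m. Write i = r·p + a, j − m = u·p + d, and i + j + m + 1 = w·p + g with r, u, w ∈ ℤ≥0 and 0 ≤ a, d, g ≤ p−1. Then: (1) if 2j + 1 ≡ 0 (mod p) (j critical), the rational function q ↦ a_{i,j,m}(q) is regular at q_c; (2) if 2j + 1 ≢ 0 (mod p), then a_{i,j,m} is singular at q_c if and only if g ≤ a and d ≤ a; moreover any singularity is a simple pole. -/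
open Matrix Filter Topology BigOperators Finset

noncomputable section

/-! At a root of unity `q_c` associated with `p`, every `[n]` (`n > 0`) is analytic, and it
vanishes, to first order, exactly when `p ∣ n` (its numerator is `q^{-n}(q^{2n} - 1)`). Hence `[n]!`
vanishes to order `⌊n/p⌋`, and `[n choose l]` to order `⌊n/p⌋ - ⌊l/p⌋ - ⌊(n-l)/p⌋ ∈ {0, 1}`, which
is `1` exactly when adding `l` and `n - l` in base `p` carries, i.e. when `n mod p < l mod p`.
Adding up, the order of `a_{i,j,m}` at `q_c` is `[p ∣ 2j+1] + [a < d] - [g ≤ a] ≥ -1`. Since the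
non-generic points are countable, they do not obstruct limits: a meromorphic function is regular
at `q_c` iff its order there is nonnegative. -/

theorem Nat.div_eq_div_add_div_sub_add_ite {p n l : ℕ} (hp : 0 < p) (hl : l ≤ n) :
    n / p = l / p + (n - l) / p + if n % p < l % p then 1 else 0 := by
  have hdiv := Nat.add_div (a := l) (b := n - l) hp
  have hmod := Nat.add_mod_add_ite l (n - l) p
  have hlt := Nat.mod_lt (n - l) hp
  rw [Nat.add_sub_cancel' hl] at hdiv hmod
  split_ifs at hdiv hmod ⊢ <;> omega

theorem Nat.ite_add_mod_lt_add_ite_dvd {p : ℕ} (hp : 1 < p) (x y : ℕ) :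
    ((if (x + y + 1) % p < (x + 1) % p then 1 else 0) + (if p ∣ x + 1 then 1 else 0) : ℤ) =
      if (x + y + 1) % p ≤ x % p then 1 else 0 := by
  have hmod := Nat.add_mod_add_ite x 1 p
  have hlt := Nat.mod_lt x (by omega : 0 < p)
  have hxy := Nat.mod_lt (x + y + 1) (by omega : 0 < p)
  rw [Nat.mod_eq_of_lt hp] at hmod
  simp only [Nat.dvd_iff_mod_eq_zero]
  split_ifs at hmod ⊢ <;> omega

theorem meromorphicOrderAt_pow_sub_one {𝕜 : Type*} [NontriviallyNormedField 𝕜] [CharZero 𝕜]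
    {m : ℕ} (hm : m ≠ 0) (z : 𝕜) [Decidable (z ^ m = 1)] :
    meromorphicOrderAt (fun q => q ^ m - 1) z = if z ^ m = 1 then 1 else 0 := by
  have hf : AnalyticAt 𝕜 (fun q : 𝕜 => q ^ m - 1) z := by fun_prop
  rw [hf.meromorphicOrderAt_eq]
  split_ifs with hz
  · have hz0 : z ≠ 0 := by rintro rfl; simp [hm] at hz
    rw [hf.analyticOrderAt_eq_one_of_zero_deriv_ne_zero (by simp [hz])]
    · rfl
    · simp [hm, hz0]
  · rw [hf.analyticOrderAt_eq_zero.2 (by simpa [sub_eq_zero] using hz)]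
    rfl

theorem qNum_natCast_eq_mul_pow_sub_one (q : ℂ) (n : ℕ) :
    qNum q n = q ^ (-(n : ℤ)) / (q - q⁻¹) * (q ^ (2 * n) - 1) := by
  rcases eq_or_ne q 0 with rfl | hq
  · simp [qNum]
  · rw [qNum, div_mul_eq_mul_div, mul_sub, mul_one, ← zpow_natCast q (2 * n), ← zpow_add₀ hq]
    push_cast; ring_nf

@[fun_prop]
theorem meromorphicAt_qNum (n : ℤ) (z : ℂ) : MeromorphicAt (fun q => qNum q n) z := by
  unfold qNum; fun_prop

theorem meromorphicOrderAt_qNum {z : ℂ} (hz : z ≠ 0) (hz2 : z ^ 2 ≠ 1) {n : ℕ} (hn : n ≠ 0)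
    [Decidable (z ^ (2 * n) = 1)] :
    meromorphicOrderAt (fun q => qNum q n) z = if z ^ (2 * n) = 1 then 1 else 0 := by
  have hsub : z - z⁻¹ ≠ 0 := by
    contrapose! hz2
    rw [sq]; nth_rewrite 2 [eq_of_sub_eq_zero hz2]; exact mul_inv_cancel₀ hz
  have hu : AnalyticAt ℂ (fun q : ℂ => q ^ (-(n : ℤ)) / (q - q⁻¹)) z :=
    ((analyticAt_id.zpow hz).div (analyticAt_id.sub (analyticAt_id.inv hz)) hsub)
  simp_rw [qNum_natCast_eq_mul_pow_sub_one]
  exact (meromorphicOrderAt_mul_of_ne_zero hu (by simp [hz, hsub])).trans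
    (meromorphicOrderAt_pow_sub_one (by omega) z)

@[fun_prop]
theorem meromorphicAt_qFact (n : ℕ) (z : ℂ) : MeromorphicAt (fun q => qFact q n) z := by
  induction n with
  | zero => exact MeromorphicAt.const 1 z
  | succ n ih => exact (meromorphicAt_qNum _ z).mul ih

@[fun_prop]
theorem meromorphicAt_qBinom (n l : ℤ) (z : ℂ) : MeromorphicAt (fun q => qBinom q n l) z := by
  unfold qBinom
  split_ifs
  · exact (meromorphicAt_qFact _ z).div ((meromorphicAt_qFact _ z).mul (meromorphicAt_qFact _ z))
  · exact MeromorphicAt.const 0 z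

@[fun_prop]
theorem meromorphicAt_aCoeff (i k s : ℤ) (z : ℂ) : MeromorphicAt (fun q => aCoeff q i k s) z := by
  unfold aCoeff; fun_prop

theorem qBinom_natCast {n l : ℕ} (hl : l ≤ n) (q : ℂ) :
    qBinom q n l = qFact q n / (qFact q l * qFact q (n - l)) := by
  rw [qBinom, if_pos ⟨by positivity, by exact_mod_cast hl⟩, ← Nat.cast_sub hl]
  simp only [Int.toNat_natCast]

section AssocRootOfUnity

variable {p : ℕ} {qc : ℂ}

theorem AssocRootOfUnity.orderOf_sq (hqc : AssocRootOfUnity qc p) : orderOf (qc ^ 2) = p :=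
  (orderOf_eq_iff (by linarith [hqc.1])).2
    ⟨by rw [← pow_mul]; exact hqc.2.1, fun m hm hm0 => by rw [← pow_mul]; exact hqc.2.2 m hm0 hm⟩

theorem AssocRootOfUnity.pow_two_mul_eq_one_iff (hqc : AssocRootOfUnity qc p) (n : ℕ) :
    qc ^ (2 * n) = 1 ↔ p ∣ n := by
  rw [pow_mul, ← orderOf_dvd_iff_pow_eq_one, hqc.orderOf_sq]

theorem AssocRootOfUnity.ne_zero (hqc : AssocRootOfUnity qc p) : qc ≠ 0 := by
  rintro rfl
  simpa [show 2 * p ≠ 0 by linarith [hqc.1]] using hqc.2.1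

theorem AssocRootOfUnity.sq_ne_one (hqc : AssocRootOfUnity qc p) : qc ^ 2 ≠ 1 := by
  simpa using (hqc.pow_two_mul_eq_one_iff 1).not.2 (by rw [Nat.dvd_one]; linarith [hqc.1])

theorem AssocRootOfUnity.notMem_genericSet (hqc : AssocRootOfUnity qc p) : qc ∉ GenericSet :=
  fun hgen => hgen.2 (2 * p) (by linarith [hqc.1]) hqc.2.1

theorem AssocRootOfUnity.meromorphicOrderAt_qNum (hqc : AssocRootOfUnity qc p) {n : ℕ}
    (hn : n ≠ 0) :
    meromorphicOrderAt (fun q => qNum q n) qc = ((if p ∣ n then 1 else 0 : ℤ)) := by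
  classical
  simp only [_root_.meromorphicOrderAt_qNum hqc.ne_zero hqc.sq_ne_one hn,
    hqc.pow_two_mul_eq_one_iff]
  split_ifs <;> rfl

theorem AssocRootOfUnity.meromorphicOrderAt_qFact (hqc : AssocRootOfUnity qc p) (n : ℕ) :
    meromorphicOrderAt (fun q => qFact q n) qc = ((n / p : ℕ) : ℤ) := by
  induction n with
  | zero => simpa [qFact] using meromorphicOrderAt_const qc (1 : ℂ)
  | succ n ih =>
    simp only [qFact]
    rw [fun_meromorphicOrderAt_mul (meromorphicAt_qNum _ qc) (meromorphicAt_qFact n qc), ih,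
      show ((n : ℤ) + 1) = ((n + 1 : ℕ) : ℤ) by push_cast; rfl,
      hqc.meromorphicOrderAt_qNum n.succ_ne_zero, Nat.succ_div]
    split_ifs <;> norm_cast <;> omega

theorem AssocRootOfUnity.meromorphicOrderAt_qBinom (hqc : AssocRootOfUnity qc p) {n l : ℕ}
    (hl : l ≤ n) :
    meromorphicOrderAt (fun q => qBinom q n l) qc = ((if n % p < l % p then 1 else 0 : ℤ)) := by
  simp only [qBinom_natCast hl]
  rw [fun_meromorphicOrderAt_div (by fun_prop) (by fun_prop),
    fun_meromorphicOrderAt_mul (by fun_prop) (by fun_prop),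
    hqc.meromorphicOrderAt_qFact, hqc.meromorphicOrderAt_qFact, hqc.meromorphicOrderAt_qFact]
  have hcarry := Nat.div_eq_div_add_div_sub_add_ite (by linarith [hqc.1] : 0 < p) hl
  exact_mod_cast show ((n / p : ℕ) : ℤ) - ((l / p : ℕ) + ((n - l) / p : ℕ)) = _ by
    rw [hcarry]; split_ifs <;> push_cast <;> ring

theorem AssocRootOfUnity.meromorphicOrderAt_aCoeff (hqc : AssocRootOfUnity qc p) {i k : ℕ}
    (s : ℕ) (hki : k ≤ i) :
    meromorphicOrderAt (fun q => aCoeff q i k s) qc =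
      (((if p ∣ k + s + 1 then 1 else 0) + (if i % p < k % p then 1 else 0) -
        if (i + s + 1) % p ≤ i % p then 1 else 0 : ℤ)) := by
  have hsign : (-1 : ℂ) ^ ((i : ℤ) + k) ≠ 0 := zpow_ne_zero _ (by norm_num)
  have h1 : (fun q => aCoeff q i k s) = (fun _ => (-1 : ℂ) ^ ((i : ℤ) + k)) * fun q =>
      qBinom q i k * (qBinom q (i + s + 1 : ℕ) (i + 1 : ℕ))⁻¹ * qNum q (k + s + 1 : ℕ) /
        qNum q (i + 1 : ℕ) := by
    funext q
    simp only [aCoeff, Pi.mul_apply]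
    push_cast
    ring
  rw [h1, meromorphicOrderAt_mul_of_ne_zero analyticAt_const hsign,
    fun_meromorphicOrderAt_div (by fun_prop) (by fun_prop),
    fun_meromorphicOrderAt_mul (by fun_prop) (by fun_prop),
    fun_meromorphicOrderAt_mul (by fun_prop) (by fun_prop),
    fun_meromorphicOrderAt_inv, hqc.meromorphicOrderAt_qBinom hki,
    hqc.meromorphicOrderAt_qBinom (by omega : i + 1 ≤ i + s + 1),
    hqc.meromorphicOrderAt_qNum (by omega), hqc.meromorphicOrderAt_qNum (by omega),
    ← Nat.ite_add_mod_lt_add_ite_dvd (by linarith [hqc.1] : 1 < p)]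
  simp only [← WithTop.coe_add, ← WithTop.LinearOrderedAddCommGroup.coe_neg,
    ← WithTop.LinearOrderedAddCommGroup.coe_sub]
  congr 1
  ring

end AssocRootOfUnity

theorem countable_compl_genericSet : GenericSetᶜ.Countable := by
  have hsub : GenericSetᶜ ⊆
      insert 0 (⋃ k : ℕ, ((Polynomial.nthRoots (k + 1) (1 : ℂ)).toFinset : Set ℂ)) := by
    intro q hq
    simp only [GenericSet, Generic, Set.mem_compl_iff, Set.mem_ofPred_eq, not_and_or, not_forall,
      not_not] at hq
    rcases hq with hq | ⟨k, hk, hqk⟩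
    · exact Or.inl hq
    · refine Or.inr (Set.mem_iUnion.2 ⟨k - 1, ?_⟩)
      rw [Finset.mem_coe, Multiset.mem_toFinset, Polynomial.mem_nthRoots (by omega),
        Nat.sub_add_cancel hk]
      exact hqk
  exact ((Set.countable_iUnion fun k => (Finset.finite_toSet _).countable).insert 0).mono hsub

theorem nhdsWithin_genericSet_neBot (z : ℂ) : (𝓝[GenericSet] z).NeBot := by
  have hdense : Dense GenericSet := by simpa using countable_compl_genericSet.dense_compl ℂ
  exact mem_closure_iff_nhdsWithin_neBot.1 (hdense z)

theorem regularAt_iff_meromorphicOrderAt_nonneg {f : ℂ → ℂ} {z : ℂ} (hf : MeromorphicAt f z)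
    (hz : z ∉ GenericSet) : RegularAt f z ↔ 0 ≤ meromorphicOrderAt f z := by
  have hle : 𝓝[GenericSet] z ≤ 𝓝[≠] z :=
    nhdsWithin_mono z fun q hq (hqz : q = z) => hz (hqz ▸ hq)
  have := nhdsWithin_genericSet_neBot z
  constructor
  · rintro ⟨L, hL⟩
    by_contra! hneg
    refine not_tendsto_atTop_of_tendsto_nhds hL.norm ?_
    rw [tendsto_norm_atTop_iff_cobounded]
    exact (tendsto_cobounded_of_meromorphicOrderAt_neg hneg).mono_left hle
  · intro hnonneg
    obtain ⟨L, hL⟩ := tendsto_nhds_of_meromorphicOrderAt_nonneg hf hnonneg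
    exact ⟨L, hL.mono_left hle⟩

/-- Here `M2 = 2m` and `k = j − m`, so that `M2 + k = j + m` and `M2 + 2k + 1 = 2j + 1`. -/
theorem stmt13 (p : ℕ) (qc : ℂ) (hroot : AssocRootOfUnity qc p)
    (M2 : ℤ) (k : ℕ) (hjm : 0 ≤ M2 + k) (i : ℕ) (hik : k ≤ i)
    (r u w a d g : ℕ) (ha : a ≤ p - 1) (hd : d ≤ p - 1) (hg : g ≤ p - 1)
    (hi : i = r * p + a) (hk : k = u * p + d)
    (hw : (i : ℤ) + (M2 + k) + 1 = (w : ℤ) * p + g) :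
    ((M2 + 2 * k + 1) % (p : ℤ) = 0 →
        RegularAt (fun q => aCoeff q i k (M2 + k)) qc) ∧
    ((M2 + 2 * k + 1) % (p : ℤ) ≠ 0 →
        (¬ RegularAt (fun q => aCoeff q i k (M2 + k)) qc ↔ g ≤ a ∧ d ≤ a)) ∧
    (∃ L : ℂ, Tendsto (fun q => (q - qc) * aCoeff q i k (M2 + k))
        (𝓝[GenericSet] qc) (𝓝 L)) := by
  obtain ⟨s, hs⟩ : ∃ s : ℕ, M2 + k = s := ⟨_, (Int.toNat_of_nonneg hjm).symm⟩
  have hp : 0 < p := by linarith [hroot.1]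
  have hia : i % p = a := by rw [hi, Nat.mul_add_mod_self_right]; exact Nat.mod_eq_of_lt (by omega)
  have hkd : k % p = d := by rw [hk, Nat.mul_add_mod_self_right]; exact Nat.mod_eq_of_lt (by omega)
  have hsg : (i + s + 1) % p = g := by
    rw [show i + s + 1 = w * p + g by rw [hs] at hw; exact_mod_cast hw, Nat.mul_add_mod_self_right]
    exact Nat.mod_eq_of_lt (by omega)
  have hcrit : (M2 + 2 * k + 1) % (p : ℤ) = 0 ↔ p ∣ k + s + 1 := by
    rw [show M2 + 2 * k + 1 = ((k + s + 1 : ℕ) : ℤ) by push_cast; omega,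
      ← Int.dvd_iff_emod_eq_zero, Int.natCast_dvd_natCast]
  have hord := hroot.meromorphicOrderAt_aCoeff s hik
  rw [hia, hkd, hsg] at hord
  have hreg := fun {f : ℂ → ℂ} (hf : MeromorphicAt f qc) =>
    regularAt_iff_meromorphicOrderAt_nonneg hf hroot.notMem_genericSet
  rw [hs]
  refine ⟨fun hc => ?_, fun hc => ?_, ?_⟩
  · rw [hreg (by fun_prop), hord, WithTop.coe_nonneg, if_pos (hcrit.1 hc)]
    split_ifs <;> omega
  · rw [hreg (by fun_prop), hord, WithTop.coe_nonneg, if_neg (hcrit.not.1 hc)]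
    split_ifs <;> omega
  · show RegularAt _ qc
    rw [hreg (by fun_prop), fun_meromorphicOrderAt_mul (by fun_prop) (by fun_prop), hord,
      meromorphicOrderAt_id_sub_const, ← WithTop.coe_one, ← WithTop.coe_add, WithTop.coe_nonneg]
    split_ifs <;> omega
end
end
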